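/- Let q ∈ (1/2,1), λ ∈ [0,1], K ≥ 1, 1 ≤ C ≤ K/2, ι ∈ [0,1), and let σ be a state-symmetric strategy with σ₁(1,k) ≥ σ₁(-1,k) for all k and σ₁(1,K/2)=C, σ₁(-1,K/2)=0 for K even. Suppose ι < 1 - max{x/φ_{σ^maj}(x) : x ∈ [0,1], λx+(1-λ)q ≤ 1/2}. Then there is no x* ∈ [0,1] with λx*+(1-λ)q ≤ 1/2 and (1-ι)·φ_σ(x*) = x*. -/
import Mathlib

open Finset

noncomputable def binPMF (J k : ℕ) (p : ℝ) : ℝ :=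
  (J.choose k : ℝ) * p ^ k * (1 - p) ^ (J - k)

noncomputable def majp (K C k : ℕ) : ℝ := if K ≤ 2 * k then (C : ℝ) else 0
noncomputable def majm (K C k : ℕ) : ℝ := if K < 2 * k then (C : ℝ) else 0

lemma binPMF_nonneg {J k : ℕ} {p : ℝ} (h0 : 0 ≤ p) (h1 : p ≤ 1) : 0 ≤ binPMF J k p := by
  unfold binPMF
  have : (0:ℝ) ≤ 1 - p := by linarith
  positivity

lemma binPMF_reflect_le {K k : ℕ} {p : ℝ} (hk2 : 2*k ≤ K) (h0 : 0 ≤ p) (hp : 2*p ≤ 1) :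
    binPMF K (K-k) p ≤ binPMF K k p := by
  have hk : k ≤ K := by omega
  unfold binPMF
  rw [Nat.choose_symm hk]
  have hKk : K - (K - k) = k := by omega
  rw [hKk]
  have hm : K - k = k + (K - 2*k) := by omega
  rw [hm]
  have h1p : (0:ℝ) ≤ 1 - p := by linarith
  have hple : p ≤ 1 - p := by linarith
  have hpow : p ^ (K - 2*k) ≤ (1-p) ^ (K - 2*k) := pow_le_pow_left₀ h0 hple _
  have e1 : (K.choose k : ℝ) * p ^ (k + (K - 2*k)) * (1-p)^k
      = ((K.choose k : ℝ) * p^k * (1-p)^k) * p^(K - 2*k) := by ring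
  have e2 : (K.choose k : ℝ) * p ^ k * (1-p)^(k + (K - 2*k))
      = ((K.choose k : ℝ) * p^k * (1-p)^k) * (1-p)^(K - 2*k) := by ring
  rw [e1, e2]
  apply mul_le_mul_of_nonneg_left hpow
  positivity

lemma majp_nonneg (K C k : ℕ) : 0 ≤ majp K C k := by
  unfold majp; split_ifs <;> positivity

lemma majm_nonneg (K C k : ℕ) : 0 ≤ majm K C k := by
  unfold majm; split_ifs <;> positivity

set_option maxHeartbeats 1000000 in
theorem stmt17 (q lam ι : ℝ) (K C : ℕ) (σp σm : ℕ → ℝ)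
    (hq : q ∈ Set.Ioo (1/2 : ℝ) 1) (hlam : lam ∈ Set.Icc (0:ℝ) 1)
    (hι : ι ∈ Set.Ico (0:ℝ) 1)
    (hK : 1 ≤ K) (hC : 1 ≤ C) (hCK : 2 * C ≤ K)
    (hrange : ∀ k ≤ K, 0 ≤ σp k ∧ σp k ≤ C ∧ 0 ≤ σm k ∧ σm k ≤ C)
    (hsym : ∀ k ≤ K, σp k + σm (K - k) = C)
    (hmono : ∀ k ≤ K, σm k ≤ σp k)
    (heven : Even K → σp (K / 2) = C ∧ σm (K / 2) = 0)
    (φσ φmaj : ℝ → ℝ)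
    (hφσ : ∀ z, φσ z = (q + ∑ k ∈ Finset.range (K+1),
        binPMF K k (lam * z + (1 - lam) * q) * (q * σp k + (1 - q) * σm k))
      / (1 + (C : ℝ)))
    (hφmaj : ∀ z, φmaj z = (q + ∑ k ∈ Finset.range (K+1),
        binPMF K k (lam * z + (1 - lam) * q) * (q * majp K C k + (1 - q) * majm K C k))
      / (1 + (C : ℝ)))
    (hιsmall : ι < 1 - sSup {r : ℝ | ∃ x ∈ Set.Icc (0:ℝ) 1,
        lam * x + (1 - lam) * q ≤ 1/2 ∧ r = x / φmaj x}) :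
    ¬ ∃ x ∈ Set.Icc (0:ℝ) 1,
        lam * x + (1 - lam) * q ≤ 1/2 ∧ (1 - ι) * φσ x = x := by
  obtain ⟨hq1, hq2⟩ := hq
  obtain ⟨hlam1, hlam2⟩ := hlam
  have hq0 : (0:ℝ) < q := by linarith
  have hCpos : (0:ℝ) < 1 + C := by positivity
  -- lower bound on φmaj
  have hφmaj_lb : ∀ y ∈ Set.Icc (0:ℝ) 1, lam * y + (1-lam)*q ≤ 1/2 →
      q/(1+(C:ℝ)) ≤ φmaj y := by
    intro y hy hmy
    rw [hφmaj]
    have hp0 : 0 ≤ lam * y + (1-lam)*q :=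
      add_nonneg (mul_nonneg hlam1 hy.1) (mul_nonneg (by linarith) hq0.le)
    have hp1 : lam * y + (1-lam)*q ≤ 1 := by linarith
    have hS : 0 ≤ ∑ k ∈ Finset.range (K+1),
        binPMF K k (lam * y + (1 - lam) * q) * (q * majp K C k + (1 - q) * majm K C k) := by
      apply Finset.sum_nonneg
      intro k _
      apply mul_nonneg (binPMF_nonneg hp0 hp1)
      have := majp_nonneg K C k
      have := majm_nonneg K C k
      nlinarith
    gcongr ?_ / (1 + (C:ℝ))
    linarith
  rintro ⟨x, hx, hmx, hfix⟩
  set p := lam * x + (1 - lam) * q with hpdef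
  have hp0 : 0 ≤ p := by
    rw [hpdef]
    exact add_nonneg (mul_nonneg hlam1 hx.1) (mul_nonneg (by linarith) hq0.le)
  have hphalf : 2 * p ≤ 1 := by linarith
  have hp1 : p ≤ 1 := by linarith
  have hb0 : ∀ k, 0 ≤ binPMF K k p := fun k => binPMF_nonneg hp0 hp1
  set a : ℕ → ℝ := fun k => σp k - majp K C k with hadef
  set w : ℕ → ℝ := fun k => q * binPMF K k p - (1-q) * binPMF K (K-k) p with hwdef
  -- case analysis lemma for paired terms
  have hcase : ∀ k, 2*k < K → 0 ≤ a k * w k + a (K-k) * w (K-k) := by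
    intro k hk
    have hkK : k ≤ K := by omega
    have hmaj0 : majp K C k = 0 := by unfold majp; rw [if_neg]; omega
    have hmajC : majp K C (K-k) = (C:ℝ) := by unfold majp; rw [if_pos]; omega
    have h1 : 0 ≤ a k := by simp only [hadef, hmaj0]; linarith [(hrange k hkK).1]
    have h2 : a (K-k) ≤ 0 := by
      simp only [hadef, hmajC]; linarith [(hrange (K-k) (by omega)).2.1]
    have h3 : 0 ≤ a k + a (K-k) := by
      have hs := hsym k hkK
      have hm := hmono (K-k) (by omega)
      simp only [hadef, hmaj0, hmajC]
      linarith
    have hbr : binPMF K (K-k) p ≤ binPMF K k p := binPMF_reflect_le (by omega) hp0 hphalf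
    have hw1 : 0 ≤ w k := by
      simp only [hwdef]
      nlinarith [hb0 (K-k)]
    have hKk : K - (K-k) = k := by omega
    have hw3 : 0 ≤ w k - w (K-k) := by
      simp only [hwdef, hKk]
      linarith
    nlinarith [mul_nonneg h3 hw1, mul_nonneg (neg_nonneg.mpr h2) hw3]
  have hcaseall : ∀ k ≤ K, 0 ≤ a k * w k + a (K-k) * w (K-k) := by
    intro k hk
    rcases lt_trichotomy (2*k) K with h|h|h
    · exact hcase k h
    · have hev : Even K := ⟨k, by omega⟩
      have hσ := (heven hev).1
      have hk2 : K/2 = k := by omega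
      rw [hk2] at hσ
      have hKk : K - k = k := by omega
      have hmaj : majp K C k = (C:ℝ) := by unfold majp; rw [if_pos]; omega
      have ha0 : a k = 0 := by simp only [hadef, hσ, hmaj]; ring
      rw [hKk, ha0]
      norm_num
    · have h2 : 2*(K-k) < K := by omega
      have hres := hcase (K-k) h2
      have hKk : K - (K-k) = k := by omega
      rw [hKk] at hres
      linarith
  have hT : 0 ≤ ∑ k ∈ Finset.range (K+1), a k * w k := by
    have hrefl : ∑ k ∈ Finset.range (K+1), a (K-k) * w (K-k)
        = ∑ k ∈ Finset.range (K+1), a k * w k := by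
      rw [← Finset.sum_range_reflect (fun k => a k * w k) (K+1)]
      apply Finset.sum_congr rfl
      intro k hk
      have : K + 1 - 1 - k = K - k := by omega
      rw [this]
    have hsum : 0 ≤ ∑ k ∈ Finset.range (K+1), (a k * w k + a (K-k) * w (K-k)) :=
      Finset.sum_nonneg (fun k hk => hcaseall k (Nat.lt_succ_iff.mp (Finset.mem_range.mp hk)))
    rw [Finset.sum_add_distrib, hrefl] at hsum
    linarith
  -- identity: difference of sums equals ∑ a k * w k
  have hstep : ∑ k ∈ Finset.range (K+1),
        (binPMF K k p * (q * σp k + (1-q) * σm k)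
          - binPMF K k p * (q * majp K C k + (1-q) * majm K C k))
      = ∑ k ∈ Finset.range (K+1), a k * w k := by
    have e1 : ∀ k ∈ Finset.range (K+1),
        binPMF K k p * (q * σp k + (1-q) * σm k)
          - binPMF K k p * (q * majp K C k + (1-q) * majm K C k)
        = q * (a k * binPMF K k p) - (1-q) * (a (K-k) * binPMF K k p) := by
      intro k hk
      have hkK : k ≤ K := Nat.lt_succ_iff.mp (Finset.mem_range.mp hk)
      have hσm : σm k = C - σp (K-k) := by
        have h := hsym (K-k) (by omega)
        have h2 : K - (K-k) = k := by omega
        rw [h2] at h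
        linarith
      have hmajm : majm K C k = (C:ℝ) - majp K C (K-k) := by
        unfold majm majp
        split_ifs with h1 h2 h3 <;> first | (exfalso; omega) | norm_num
      rw [hσm, hmajm]
      simp only [hadef]
      ring
    rw [Finset.sum_congr rfl e1]
    have refl1 : ∑ k ∈ Finset.range (K+1), a (K-k) * binPMF K k p
        = ∑ k ∈ Finset.range (K+1), a k * binPMF K (K-k) p := by
      rw [← Finset.sum_range_reflect (fun k => a k * binPMF K (K-k) p) (K+1)]
      apply Finset.sum_congr rfl
      intro k hk
      have hkK : k ≤ K := Nat.lt_succ_iff.mp (Finset.mem_range.mp hk)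
      have e2 : K + 1 - 1 - k = K - k := by omega
      have e3 : K - (K - k) = k := by omega
      rw [e2, e3]
    rw [Finset.sum_sub_distrib, ← Finset.mul_sum, ← Finset.mul_sum, refl1,
      Finset.mul_sum, Finset.mul_sum, ← Finset.sum_sub_distrib]
    apply Finset.sum_congr rfl
    intro k hk
    simp only [hwdef]
    ring
  have hdiff : ∑ k ∈ Finset.range (K+1),
        binPMF K k p * (q * majp K C k + (1-q) * majm K C k)
      ≤ ∑ k ∈ Finset.range (K+1), binPMF K k p * (q * σp k + (1-q) * σm k) := by
    rw [← sub_nonneg, ← Finset.sum_sub_distrib, hstep]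
    exact hT
  have key : φmaj x ≤ φσ x := by
    rw [hφσ, hφmaj, ← hpdef]
    gcongr ?_ / (1 + (C:ℝ))
    linarith [hdiff]
  -- final contradiction
  have hφmx : q/(1+(C:ℝ)) ≤ φmaj x := hφmaj_lb x hx (by rw [← hpdef]; exact hmx)
  have hφpos : 0 < φmaj x := lt_of_lt_of_le (by positivity) hφmx
  have hmem : x / φmaj x ∈ {r : ℝ | ∃ y ∈ Set.Icc (0:ℝ) 1,
      lam * y + (1 - lam) * q ≤ 1/2 ∧ r = y / φmaj y} :=
    ⟨x, hx, by rw [← hpdef]; exact hmx, rfl⟩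
  have hbdd : BddAbove {r : ℝ | ∃ y ∈ Set.Icc (0:ℝ) 1,
      lam * y + (1 - lam) * q ≤ 1/2 ∧ r = y / φmaj y} := by
    refine ⟨(1+(C:ℝ))/q, ?_⟩
    rintro r ⟨y, hy, hmy, rfl⟩
    have h1 : q/(1+(C:ℝ)) ≤ φmaj y := hφmaj_lb y hy hmy
    have h2 : 0 < φmaj y := lt_of_lt_of_le (by positivity) h1
    rw [div_le_div_iff₀ h2 hq0]
    have h3 : q ≤ (1+(C:ℝ)) * φmaj y := by
      rw [div_le_iff₀ hCpos] at h1
      linarith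
    nlinarith [hy.1, hy.2]
  have hsup : x / φmaj x ≤ sSup {r : ℝ | ∃ y ∈ Set.Icc (0:ℝ) 1,
      lam * y + (1 - lam) * q ≤ 1/2 ∧ r = y / φmaj y} := le_csSup hbdd hmem
  have hlt : x / φmaj x < 1 - ι := by linarith
  rw [div_lt_iff₀ hφpos] at hlt
  have hι1 : 0 < 1 - ι := by linarith [hι.2]
  have hkey2 : (1-ι) * φmaj x ≤ (1-ι) * φσ x :=
    mul_le_mul_of_nonneg_left key hι1.le
  linarith
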